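/- arXiv:math-ph/0412019 — 2 statements merged into one kernel-verified Lean document; each statement's English description precedes it below -/
import Mathlib

section
/- Let u : ℝⁿ → ℝⁿ be a C¹ vector field with global flow φ (so φ : ℝ × ℝⁿ → ℝⁿ is C¹ jointly, φ_0 = id, φ_{t+s} = φ_t ∘ φ_s, ∂_t φ_t(x) = u(φ_t(x))). Let U ⊆ ℝⁿ be open, x₀ ∈ U, and let p : U → (0,∞) be differentiable at x₀ and satisfy φ_{p(x)}(x) = x for all x ∈ U. Then Dφ_{p(x₀)}(x₀) = I − u(x₀) (∇p(x₀))ᵀ, and consequently for every ξ₀ ∈ ℝⁿ with ξ₀ · u(x₀) = 0 one has (Dφ_{p(x₀)}(x₀))ᵀ ξ₀ = ξ₀. -/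
/-!
Write `Φ(t, x) = φ_t(x)`. Differentiating the identity `Φ(p(x), x) = x` at `x₀` by the chain rule
gives `∂ₜΦ · Dp + ∂ₓΦ = I`, and `∂ₜΦ(p(x₀), x₀) = u(φ_{p(x₀)}(x₀)) = u(x₀)`, so
`Dφ_{p(x₀)}(x₀) = ∂ₓΦ = I - u(x₀) Dp(x₀)`. Its transpose is `I - ∇p(x₀) u(x₀)ᵀ`, which fixes every
vector orthogonal to `u(x₀)`.
-/

/-- The Jacobian matrix `Dφ(x)` of a map `φ : ℝⁿ → ℝⁿ`. -/
noncomputable def jacobian {n : ℕ} (f : (Fin n → ℝ) → (Fin n → ℝ)) (x : Fin n → ℝ) :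
    Matrix (Fin n) (Fin n) ℝ :=
  Matrix.of fun i j => fderiv ℝ f x (Pi.single j 1) i

open Filter Topology ContinuousLinearMap

section ReturnTime

variable {𝕜 E : Type*} [NontriviallyNormedField 𝕜] [NormedAddCommGroup E] [NormedSpace 𝕜 E]

theorem hasFDerivAt_slice_of_eventually_returnTime {Φ : 𝕜 × E → E} {L : 𝕜 × E →L[𝕜] E}
    {p : E → 𝕜} {p' : E →L[𝕜] 𝕜} {x₀ v : E}
    (hΦ : HasFDerivAt Φ L (p x₀, x₀)) (hp : HasFDerivAt p p' x₀)
    (hv : HasDerivAt (fun t => Φ (t, x₀)) v (p x₀))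
    (hret : ∀ᶠ x in 𝓝 x₀, Φ (p x, x) = x) :
    HasFDerivAt (fun y => Φ (p x₀, y)) (ContinuousLinearMap.id 𝕜 E - p'.smulRight v) x₀ := by
  have hslice : HasFDerivAt (fun y => Φ (p x₀, y)) (L.comp (inr 𝕜 𝕜 E)) x₀ :=
    hΦ.comp x₀ ((hasFDerivAt_const _ _).prodMk (hasFDerivAt_id x₀))
  have htime : L (1, 0) = v :=
    (hΦ.comp_hasDerivAt (p x₀) ((hasDerivAt_id _).prodMk (hasDerivAt_const _ _))).unique hv
  have hchain : L.comp (p'.prod (ContinuousLinearMap.id 𝕜 E)) = ContinuousLinearMap.id 𝕜 E :=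
    (hΦ.comp x₀ (f := fun x => (p x, x)) (hp.prodMk (hasFDerivAt_id x₀))).unique
      ((hasFDerivAt_id x₀).congr_of_eventuallyEq (f₁ := fun x => Φ (p x, x)) hret)
  refine hslice.congr_fderiv (ContinuousLinearMap.ext fun y => ?_)
  have hy : L (p' y, y) = y := congr($hchain y)
  have hsplit : (p' y, y) = p' y • ((1 : 𝕜), (0 : E)) + ((0 : 𝕜), y) := by simp
  rw [hsplit, map_add, map_smul, htime] at hy
  simp only [sub_apply, coe_id', id_eq, smulRight_apply, comp_apply, inr_apply]
  exact eq_sub_of_add_eq' hy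

end ReturnTime

theorem jacobian_eq_toMatrix' {n : ℕ} (f : (Fin n → ℝ) → (Fin n → ℝ)) (x : Fin n → ℝ) :
    jacobian f x = LinearMap.toMatrix' (fderiv ℝ f x : (Fin n → ℝ) →ₗ[ℝ] (Fin n → ℝ)) := by
  ext i j
  simp [jacobian, LinearMap.toMatrix'_apply]

theorem LinearMap.toMatrix'_id_sub_smulRight {R ι : Type*} [CommRing R] [Fintype ι]
    [DecidableEq ι] [TopologicalSpace R] [IsTopologicalRing R]
    (p' : (ι → R) →L[R] R) (v : ι → R) :
    LinearMap.toMatrix' ((ContinuousLinearMap.id R (ι → R) - p'.smulRight v : (ι → R) →L[R] (ι → R))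
      : (ι → R) →ₗ[R] (ι → R)) = 1 - Matrix.vecMulVec v (fun j => p' (Pi.single j 1)) := by
  ext i j
  simp [LinearMap.toMatrix'_apply, Matrix.one_apply, Matrix.vecMulVec, Pi.single_apply,
    mul_comm]

namespace Matrix

theorem transpose_one_sub_vecMulVec_mulVec_of_dotProduct_eq_zero {R ι : Type*} [CommRing R]
    [Fintype ι] [DecidableEq ι] {v w ξ : ι → R} (hξ : ξ ⬝ᵥ v = 0) :
    (1 - vecMulVec v w)ᵀ *ᵥ ξ = ξ := by
  rw [mulVec_transpose, vecMul_sub, vecMul_one, vecMul_vecMulVec, hξ, zero_smul, sub_zero]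

end Matrix

theorem stmt_7_general {n : ℕ}
    (u : (Fin n → ℝ) → (Fin n → ℝ))
    (φ : ℝ → (Fin n → ℝ) → (Fin n → ℝ))
    (hφC1 : ContDiff ℝ 1 (fun q : ℝ × (Fin n → ℝ) => φ q.1 q.2))
    (hφode : ∀ t y, HasDerivAt (fun τ => φ τ y) (u (φ t y)) t)
    (U : Set (Fin n → ℝ)) (hU : IsOpen U) (x₀ : Fin n → ℝ) (hx₀ : x₀ ∈ U)
    (p : (Fin n → ℝ) → ℝ)
    (hpdiff : DifferentiableAt ℝ p x₀)
    (hper : ∀ x ∈ U, φ (p x) x = x) :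
    jacobian (φ (p x₀)) x₀ =
      1 - Matrix.vecMulVec (u x₀) (fun j => fderiv ℝ p x₀ (Pi.single j 1)) ∧
    ∀ ξ₀ : Fin n → ℝ, (∑ i, ξ₀ i * u x₀ i) = 0 →
      (jacobian (φ (p x₀)) x₀).transpose.mulVec ξ₀ = ξ₀ := by
  have hslice : HasFDerivAt (φ (p x₀))
      (ContinuousLinearMap.id ℝ _ - (fderiv ℝ p x₀).smulRight (u x₀)) x₀ := by
    refine hasFDerivAt_slice_of_eventually_returnTime
      (Φ := fun q : ℝ × (Fin n → ℝ) => φ q.1 q.2)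
      ((hφC1.differentiable one_ne_zero _).hasFDerivAt) hpdiff.hasFDerivAt ?_
      (eventually_of_mem (hU.mem_nhds hx₀) hper)
    simpa [hper x₀ hx₀] using hφode (p x₀) x₀
  have hjac : jacobian (φ (p x₀)) x₀ =
      1 - Matrix.vecMulVec (u x₀) (fun j => fderiv ℝ p x₀ (Pi.single j 1)) := by
    rw [jacobian_eq_toMatrix', hslice.fderiv, LinearMap.toMatrix'_id_sub_smulRight]
  exact ⟨hjac, fun ξ₀ hξ => hjac ▸
    Matrix.transpose_one_sub_vecMulVec_mulVec_of_dotProduct_eq_zero hξ⟩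

/-- If `p` is a (locally defined, differentiable at `x₀`) period function
of the flow `φ` of `u`, i.e. `φ_{p(x)}(x) = x` near `x₀`, then
`Dφ_{p(x₀)}(x₀) = I − u(x₀)(∇p(x₀))ᵀ`; consequently `(Dφ_{p(x₀)}(x₀))ᵀ ξ₀ = ξ₀` for
every `ξ₀` orthogonal to `u(x₀)`. -/
theorem stmt_7 {n : ℕ}
    (u : (Fin n → ℝ) → (Fin n → ℝ)) (hu : ContDiff ℝ 1 u)
    (φ : ℝ → (Fin n → ℝ) → (Fin n → ℝ))
    (hφC1 : ContDiff ℝ 1 (fun q : ℝ × (Fin n → ℝ) => φ q.1 q.2))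
    (hφ0 : ∀ y, φ 0 y = y)
    (hφadd : ∀ t s y, φ (t + s) y = φ t (φ s y))
    (hφode : ∀ t y, HasDerivAt (fun τ => φ τ y) (u (φ t y)) t)
    (U : Set (Fin n → ℝ)) (hU : IsOpen U) (x₀ : Fin n → ℝ) (hx₀ : x₀ ∈ U)
    (p : (Fin n → ℝ) → ℝ) (hppos : ∀ x ∈ U, 0 < p x)
    (hpdiff : DifferentiableAt ℝ p x₀)
    (hper : ∀ x ∈ U, φ (p x) x = x) :
    jacobian (φ (p x₀)) x₀ =
      1 - Matrix.vecMulVec (u x₀) (fun j => fderiv ℝ p x₀ (Pi.single j 1)) ∧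
    ∀ ξ₀ : Fin n → ℝ, (∑ i, ξ₀ i * u x₀ i) = 0 →
      (jacobian (φ (p x₀)) x₀).transpose.mulVec ξ₀ = ξ₀ :=
  stmt_7_general u φ hφC1 hφode U hU x₀ hx₀ p hpdiff hper
end

section
/- Let φ : ℝ × ℝⁿ → ℝⁿ be C¹ jointly in (t,x) with φ_0 = id and φ_{t+s} = φ_t ∘ φ_s, let u(x) := ∂_t φ_t(x)|_{t=0}, and assume φ is volume-preserving: det Dφ_t(x) = 1 for all t, x. Fix x₀ ∈ ℝⁿ and vectors e₁, …, e_{n−1} ∈ ℝⁿ, and define H : ℝ × ℝ^{n−1} → ℝⁿ by H(t, σ) = φ_t(x₀ + Σ_{i=1}^{n−1} σᵢ eᵢ). Then for all (t,σ), the Jacobian determinant of H satisfies det[∂_t H(t,σ), ∂_{σ₁} H(t,σ), …, ∂_{σ_{n−1}} H(t,σ)] = det[u(x_σ), e₁, …, e_{n−1}], where x_σ = x₀ + Σᵢ σᵢ eᵢ; in particular this determinant is independent of t. -/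
open scoped Matrix

theorem jacobian_mulVec {n : ℕ} (f : (Fin n → ℝ) → (Fin n → ℝ)) (x v : Fin n → ℝ) :
    jacobian f x *ᵥ v = fderiv ℝ f x v := by
  have : jacobian f x = LinearMap.toMatrix' (fderiv ℝ f x : (Fin n → ℝ) →ₗ[ℝ] Fin n → ℝ) := by
    ext i j
    rfl
  rw [this, LinearMap.toMatrix'_mulVec]
  rfl

/-- The `n × n` matrix with columns `a, b 0, …, b (n - 2)`. -/
def consCols {n : ℕ} (a : Fin n → ℝ) (b : Fin (n - 1) → Fin n → ℝ) : Matrix (Fin n) (Fin n) ℝ :=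
  Matrix.of fun i j =>
    if hj : (j : ℕ) = 0 then a i else b ⟨(j : ℕ) - 1, by omega⟩ i

theorem mul_consCols {n : ℕ} (A : Matrix (Fin n) (Fin n) ℝ) (a : Fin n → ℝ)
    (b : Fin (n - 1) → Fin n → ℝ) :
    A * consCols a b = consCols (A *ᵥ a) (fun k => A *ᵥ b k) := by
  ext i j
  by_cases hj : (j : ℕ) = 0 <;> simp [consCols, Matrix.mul_apply, Matrix.mulVec, dotProduct, hj]

theorem hasDerivAt_flow_orbit {E : Type*} [NormedAddCommGroup E] [NormedSpace ℝ E]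
    {φ : ℝ → E → E} (hφadd : ∀ t s y, φ (t + s) y = φ t (φ s y)) {x : E}
    (hφ0 : φ 0 x = x) {t : ℝ} (hφt : DifferentiableAt ℝ (φ t) x)
    (horbit : DifferentiableAt ℝ (fun τ => φ τ x) 0) :
    HasDerivAt (fun τ => φ τ x) (fderiv ℝ (φ t) x (deriv (fun τ => φ τ x) 0)) t := by
  have hshift : HasDerivAt (fun τ => φ (τ - t) x) (deriv (fun τ => φ τ x) 0) t := by
    have horbit' := horbit.hasDerivAt
    rw [← sub_self t] at horbit'
    simpa only [sub_self] using horbit'.comp_sub_const t t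
  have hφt' : HasFDerivAt (φ t) (fderiv ℝ (φ t) x) (φ (t - t) x) := by
    rw [sub_self, hφ0]
    exact hφt.hasFDerivAt
  have hlaw : (fun τ => φ t (φ (τ - t) x)) = fun τ => φ τ x := by
    funext τ
    rw [← hφadd, add_sub_cancel]
  have hcomp := hφt'.comp_hasDerivAt t hshift
  rwa [Function.comp_def, hlaw] at hcomp

theorem fderiv_comp_affine_apply_single {ι E F : Type*} [Fintype ι] [DecidableEq ι]
    [NormedAddCommGroup E] [NormedSpace ℝ E] [NormedAddCommGroup F] [NormedSpace ℝ F]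
    {f : E → F} (x₀ : E) (e : ι → E) (σ : ι → ℝ)
    (hf : DifferentiableAt ℝ f (x₀ + ∑ l, σ l • e l)) (k : ι) :
    fderiv ℝ (fun σ' : ι → ℝ => f (x₀ + ∑ l, σ' l • e l)) σ (Pi.single k 1)
      = fderiv ℝ f (x₀ + ∑ l, σ l • e l) (e k) := by
  let L : (ι → ℝ) →L[ℝ] E := ∑ l, (ContinuousLinearMap.proj l).smulRight (e l)
  have hL : ∀ v, L v = ∑ l, v l • e l := fun v => by simp [L]
  have hinner : HasFDerivAt (fun σ' : ι → ℝ => x₀ + ∑ l, σ' l • e l) L σ := by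
    simpa only [hL] using L.hasFDerivAt.const_add x₀
  have hcomp : HasFDerivAt (fun σ' : ι → ℝ => f (x₀ + ∑ l, σ' l • e l))
      ((fderiv ℝ f (x₀ + ∑ l, σ l • e l)).comp L) σ :=
    hf.hasFDerivAt.comp σ hinner
  rw [hcomp.fderiv, ContinuousLinearMap.comp_apply, hL]
  simp [Pi.single_apply]

/-- Change of variables over a flow-box: for a volume-preserving C¹
flow `φ` with generator `u(x) = ∂_t φ_t(x)|_{t=0}`, the Jacobian determinant of
`H(t,σ) = φ_t(x₀ + Σ σᵢ eᵢ)` equals `det[u(x_σ), e₁, …, e_{n−1}]`; in particular it is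
independent of `t`. -/
theorem stmt_19 {n : ℕ}
    (φ : ℝ → (Fin n → ℝ) → (Fin n → ℝ))
    (hφC1 : ContDiff ℝ 1 (fun q : ℝ × (Fin n → ℝ) => φ q.1 q.2))
    (hφ0 : ∀ y, φ 0 y = y)
    (hφadd : ∀ t s y, φ (t + s) y = φ t (φ s y))
    (hvol : ∀ (t : ℝ) (y : Fin n → ℝ), (jacobian (φ t) y).det = 1)
    (x₀ : Fin n → ℝ) (e : Fin (n - 1) → Fin n → ℝ) :
    ∀ (t : ℝ) (σ : Fin (n - 1) → ℝ),
      Matrix.det (Matrix.of fun i (j : Fin n) =>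
        if hj : (j : ℕ) = 0 then
          deriv (fun τ => φ τ (fun i' => x₀ i' + ∑ l, σ l * e l i')) t i
        else
          fderiv ℝ (fun σ' : Fin (n - 1) → ℝ =>
              φ t (fun i' => x₀ i' + ∑ l, σ' l * e l i')) σ
            (Pi.single ⟨(j : ℕ) - 1, by have h1 := j.isLt; omega⟩ 1) i)
      = Matrix.det (Matrix.of fun i (j : Fin n) =>
        if hj : (j : ℕ) = 0 then
          deriv (fun τ => φ τ (fun i' => x₀ i' + ∑ l, σ l * e l i')) 0 i
        else e ⟨(j : ℕ) - 1, by have h1 := j.isLt; omega⟩ i) := by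
  intro t σ
  have hφ := hφC1.differentiable one_ne_zero
  have hφt : ∀ s, Differentiable ℝ (φ s) := fun s =>
    hφ.comp ((differentiable_const s).prodMk differentiable_id)
  have hpoint : ∀ σ' : Fin (n - 1) → ℝ,
      (fun i' => x₀ i' + ∑ l, σ' l * e l i') = x₀ + ∑ l, σ' l • e l := fun σ' => by
    ext i'
    simp [Finset.sum_apply]
  simp_rw [hpoint]
  set xσ := x₀ + ∑ l, σ l • e l
  have hdt : deriv (fun τ => φ τ xσ) t = jacobian (φ t) xσ *ᵥ deriv (fun τ => φ τ xσ) 0 := by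
    rw [jacobian_mulVec]
    exact (hasDerivAt_flow_orbit hφadd (hφ0 xσ) (hφt t xσ)
      ((hφ.comp (differentiable_id.prodMk (differentiable_const xσ))) 0)).deriv
  have hdσ : ∀ k, fderiv ℝ (fun σ' : Fin (n - 1) → ℝ => φ t (x₀ + ∑ l, σ' l • e l)) σ
      (Pi.single k 1) = jacobian (φ t) xσ *ᵥ e k := fun k => by
    rw [jacobian_mulVec, fderiv_comp_affine_apply_single x₀ e σ (hφt t xσ)]
  simp_rw [hdσ, hdt]
  set J := jacobian (φ t) xσ
  set u := deriv (fun τ => φ τ xσ) 0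
  change (consCols (J *ᵥ u) fun k => J *ᵥ e k).det = (consCols u e).det
  rw [← mul_consCols, Matrix.det_mul, hvol, one_mul]
end
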